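/- arXiv:2510.08814 — 3 statements merged into one kernel-verified Lean document; each statement's English description precedes it below -/
import Mathlib

section
/- Valiant–Vazirani isolation lemma: let m, k ≥ 1 and let S be a nonempty finite set of vectors in Fin m → ZMod 2 such that 2·|S| ≤ 2^k ≤ 4·|S|. If the pair (A, b) is uniformly distributed on Matrix (Fin k) (Fin m) (ZMod 2) × (Fin k → ZMod 2), then the probability that there is exactly one x ∈ S with A.mulVec x = b is at least 1/8. -/
open scoped ENNReal

instance : MeasurableSpace (ZMod 2) := ⊤

instance (k m : ℕ) : MeasurableSpace (Matrix (Fin k) (Fin m) (ZMod 2)) := ⊤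

instance : MeasurableSingletonClass (ZMod 2) :=
  ⟨fun _ => MeasurableSpace.measurableSet_top⟩

instance (k m : ℕ) : MeasurableSingletonClass (Matrix (Fin k) (Fin m) (ZMod 2)) :=
  ⟨fun _ => MeasurableSpace.measurableSet_top⟩

open Finset

private lemma zmod2_cases : ∀ a : ZMod 2, a = 0 ∨ a = 1 := by decide

private lemma vv_row_count {m : ℕ} (v : Fin m → ZMod 2) (hv : v ≠ 0) :
    2 * (univ.filter (fun r : Fin m → ZMod 2 => dotProduct r v = 0)).card = 2 ^ m := by
  classical
  obtain ⟨j, hj⟩ : ∃ j, v j ≠ 0 := by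
    by_contra h
    push_neg at h
    exact hv (funext fun j => h j)
  have hvj : v j = 1 := (zmod2_cases (v j)).resolve_left hj
  set e : Fin m → ZMod 2 := Pi.single j 1 with he
  have hee : ∀ w : Fin m → ZMod 2, w + e + e = w := by
    intro w
    rw [add_assoc]
    have : e + e = 0 := by
      ext i
      show e i + e i = 0
      rcases zmod2_cases (e i) with h | h <;> rw [h] <;> decide
    rw [this, add_zero]
  have hdot : ∀ r : Fin m → ZMod 2,
      dotProduct (r + e) v = dotProduct r v + 1 := by
    intro r
    rw [add_dotProduct, he, single_dotProduct, hvj, one_mul]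
  have hcard : (univ.filter (fun r : Fin m → ZMod 2 => dotProduct r v = 0)).card =
      (univ.filter (fun r : Fin m → ZMod 2 => ¬ dotProduct r v = 0)).card := by
    apply Finset.card_bij' (fun r _ => r + e) (fun r _ => r + e)
    · intro r hr
      simp only [mem_filter, mem_univ, true_and] at hr ⊢
      rw [hdot, hr]
      decide
    · intro r hr
      simp only [mem_filter, mem_univ, true_and] at hr ⊢
      have h1 : dotProduct r v = 1 := (zmod2_cases _).resolve_left hr
      rw [hdot, h1]
      decide
    · intro r _; exact hee r
    · intro r _; exact hee r
  have := Finset.card_filter_add_card_filter_not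
    (s := (univ : Finset (Fin m → ZMod 2)))
    (p := fun r : Fin m → ZMod 2 => dotProduct r v = 0)
  rw [← hcard] at this
  have hu : (univ : Finset (Fin m → ZMod 2)).card = 2 ^ m := by
    rw [Finset.card_univ, Fintype.card_fun, ZMod.card, Fintype.card_fin]
  omega

private lemma vv_mat_count {k m : ℕ} (hm : 1 ≤ m) (v : Fin m → ZMod 2) (hv : v ≠ 0) :
    (univ.filter (fun A : Matrix (Fin k) (Fin m) (ZMod 2) => A.mulVec v = 0)).card
      = (2 ^ (m - 1)) ^ k := by
  classical
  have hR : (univ.filter (fun r : Fin m → ZMod 2 => dotProduct r v = 0)).card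
      = 2 ^ (m - 1) := by
    have h := vv_row_count v hv
    have hm' : 2 ^ m = 2 * 2 ^ (m - 1) := by
      conv_lhs => rw [show m = (m - 1) + 1 by omega]
      rw [pow_succ]
      ring
    omega
  have hset : (univ.filter (fun A : Matrix (Fin k) (Fin m) (ZMod 2) => A.mulVec v = 0)).card
      = (Fintype.piFinset (fun _ : Fin k =>
          univ.filter (fun r : Fin m → ZMod 2 => dotProduct r v = 0))).card := by
    refine Finset.card_bij' (fun A _ => A) (fun A _ => A) ?_ ?_ ?_ ?_
    · intro A hA
      simp only [mem_filter, mem_univ, true_and] at hA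
      refine Fintype.mem_piFinset.mpr fun i => ?_
      simp only [mem_filter, mem_univ, true_and]
      exact congrFun hA i
    · intro A hA
      refine Finset.mem_filter.mpr ⟨Finset.mem_univ _, ?_⟩
      funext i
      have h := Fintype.mem_piFinset.mp hA i
      simp only [mem_filter, mem_univ, true_and] at h
      exact h
    · intros; rfl
    · intros; rfl
  rw [hset, Fintype.card_piFinset]
  simp [hR]

private lemma vv_pair_count {k m : ℕ} (x : Fin m → ZMod 2)
    (Q : Matrix (Fin k) (Fin m) (ZMod 2) → Prop) [DecidablePred Q] :
    (univ.filter (fun p : Matrix (Fin k) (Fin m) (ZMod 2) × (Fin k → ZMod 2) =>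
        p.1.mulVec x = p.2 ∧ Q p.1)).card
      = (univ.filter Q).card := by
  classical
  refine Finset.card_bij' (fun p _ => p.1) (fun A _ => (A, A.mulVec x)) ?_ ?_ ?_ ?_
  · intro p hp
    simp only [mem_filter, mem_univ, true_and] at hp ⊢
    exact hp.2
  · intro A hA
    simp only [mem_filter, mem_univ, true_and] at hA ⊢
    exact hA
  · intro p hp
    simp only [mem_filter, mem_univ, true_and] at hp
    exact Prod.ext rfl hp.1
  · intro A _
    rfl

private lemma vv_arith (s k C : ℕ) (hC : 1 ≤ C) (hs : 1 ≤ s)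
    (hlow : 2 * s ≤ 2 ^ k) (hhigh : 2 ^ k ≤ 4 * s) :
    2 ^ k * C * 2 ^ k ≤ 8 * (s * (2 ^ k * C - (s - 1) * C)) := by
  set t := 2 ^ k with ht
  have hst : s - 1 < t := by omega
  have hsub : t * C - (s - 1) * C = (t - (s - 1)) * C := (Nat.sub_mul _ _ _).symm
  rw [hsub]
  set u := t - (s - 1) with hu
  have hut : u + (s - 1) = t := by omega
  have key : t * t ≤ 8 * (s * u) := by
    calc t * t ≤ 4 * s * t := Nat.mul_le_mul_right t hhigh
    _ ≤ 4 * s * (2 * u) := Nat.mul_le_mul_left _ (by omega)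
    _ = 8 * (s * u) := by ring
  calc t * C * t = (t * t) * C := by ring
  _ ≤ (8 * (s * u)) * C := Nat.mul_le_mul_right C key
  _ = 8 * (s * (u * C)) := by ring

/-- Valiant–Vazirani isolation lemma: if `S` is a nonempty set of vectors with
`2·|S| ≤ 2^k ≤ 4·|S|`, then a uniformly random pair `(A, b)` isolates a unique element of
`S` (i.e. exactly one `x ∈ S` satisfies `A x = b`) with probability at least `1/8`. -/
theorem vv_isolation (m k : ℕ) (hm : 1 ≤ m) (hk : 1 ≤ k)
    (S : Finset (Fin m → ZMod 2)) (hS : S.Nonempty)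
    (hlow : 2 * S.card ≤ 2 ^ k) (hhigh : 2 ^ k ≤ 4 * S.card) :
    (1 : ℝ≥0∞) / 8 ≤
      (PMF.uniformOfFintype
          (Matrix (Fin k) (Fin m) (ZMod 2) × (Fin k → ZMod 2))).toMeasure
        {p | ∃! x, x ∈ S ∧ p.1.mulVec x = p.2} := by
  classical
  set α := Matrix (Fin k) (Fin m) (ZMod 2) × (Fin k → ZMod 2) with hα
  set E : Set α := {p | ∃! x, x ∈ S ∧ p.1.mulVec x = p.2} with hE
  have hmeas : MeasurableSet E := (Set.to_countable E).measurableSet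
  rw [PMF.toMeasure_apply _ hmeas, tsum_fintype]
  have hsum : ∑ a : α, E.indicator (⇑(PMF.uniformOfFintype α)) a
      = ((univ.filter (fun a => a ∈ E)).card : ℝ≥0∞) * ((Fintype.card α : ℝ≥0∞))⁻¹ := by
    simp only [Set.indicator_apply, PMF.uniformOfFintype_apply]
    rw [← Finset.sum_filter, Finset.sum_const, nsmul_eq_mul]
  rw [hsum]
  -- the counting part
  set C : ℕ := (2 ^ (m - 1)) ^ k with hC
  set s : ℕ := S.card with hs
  have hC1 : 1 ≤ C := Nat.one_le_pow _ _ (Nat.pow_pos (by norm_num))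
  have hs1 : 1 ≤ s := hS.card_pos
  -- cardinality of α
  have hMcard : Fintype.card (Matrix (Fin k) (Fin m) (ZMod 2)) = (2 ^ m) ^ k := by
    have h : Fintype.card (Matrix (Fin k) (Fin m) (ZMod 2))
        = Fintype.card (Fin k → Fin m → ZMod 2) :=
      Fintype.card_congr (Matrix.of (m := Fin k) (n := Fin m) (α := ZMod 2)).symm
    rw [h, Fintype.card_fun, Fintype.card_fun, ZMod.card, Fintype.card_fin, Fintype.card_fin]
  have hNcard : Fintype.card α = (2 ^ m) ^ k * 2 ^ k := by
    show Fintype.card (Matrix (Fin k) (Fin m) (ZMod 2) × (Fin k → ZMod 2)) = _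
    rw [Fintype.card_prod, hMcard, Fintype.card_fun, ZMod.card, Fintype.card_fin]
  have hmk : (2 ^ m) ^ k = 2 ^ k * C := by
    rw [hC, ← Nat.mul_pow]
    congr 1
    conv_lhs => rw [show m = (m - 1) + 1 by omega]
    rw [pow_succ]
    ring
  -- decomposition of the good set
  set G : (Fin m → ZMod 2) → Finset α := fun x =>
    univ.filter (fun p : α => p.1.mulVec x = p.2 ∧ ∀ y ∈ S, p.1.mulVec y = p.2 → y = x)
    with hG
  have hgood : (univ.filter (fun a : α => a ∈ E)) = S.biUnion G := by
    ext p
    simp only [mem_filter, mem_univ, true_and, hE, Set.mem_setOf_eq, mem_biUnion, hG,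
      ExistsUnique]
    constructor
    · rintro ⟨x, ⟨hxS, hxb⟩, hun⟩
      exact ⟨x, hxS, hxb, fun y hy hyb => hun y ⟨hy, hyb⟩⟩
    · rintro ⟨x, hxS, hxb, hun⟩
      exact ⟨x, ⟨hxS, hxb⟩, fun y ⟨hy, hyb⟩ => hun y hy hyb⟩
  have hdisj : ∀ x ∈ S, ∀ y ∈ S, x ≠ y → Disjoint (G x) (G y) := by
    intro x hx y hy hxy
    rw [Finset.disjoint_left]
    intro p hpx hpy
    simp only [hG, mem_filter, mem_univ, true_and] at hpx hpy
    exact hxy ((hpx.2 y hy hpy.1).symm)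
  -- lower bound on each `G x`
  have hGlb : ∀ x ∈ S, 2 ^ k * C - (s - 1) * C ≤ (G x).card := by
    intro x hx
    set B : Finset α := (S.erase x).biUnion (fun y =>
      univ.filter (fun p : α => p.1.mulVec x = p.2 ∧ p.1.mulVec y = p.2)) with hB
    have hsub : (univ.filter (fun p : α => p.1.mulVec x = p.2)) \ B ⊆ G x := by
      intro p hp
      rw [Finset.mem_sdiff] at hp
      obtain ⟨hp1, hp2⟩ := hp
      simp only [mem_filter, mem_univ, true_and] at hp1
      simp only [hG, mem_filter, mem_univ, true_and]
      refine ⟨hp1, fun y hy hyb => ?_⟩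
      by_contra hne
      apply hp2
      rw [hB, mem_biUnion]
      exact ⟨y, Finset.mem_erase.mpr ⟨hne, hy⟩, by
        simp only [mem_filter, mem_univ, true_and]; exact ⟨hp1, hyb⟩⟩
    have hEx : (univ.filter (fun p : α => p.1.mulVec x = p.2)).card = 2 ^ k * C := by
      have h := vv_pair_count (k := k) x (fun _ => True)
      simp only [and_true, Finset.filter_true, Finset.card_univ] at h
      rw [h, hMcard, hmk]
    have hBcard : B.card ≤ (s - 1) * C := by
      calc B.card ≤ ∑ y ∈ S.erase x, (univ.filter
          (fun p : α => p.1.mulVec x = p.2 ∧ p.1.mulVec y = p.2)).card :=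
          Finset.card_biUnion_le
      _ = ∑ y ∈ S.erase x, C := by
          apply Finset.sum_congr rfl
          intro y hy
          rw [Finset.mem_erase] at hy
          have hfe : (univ.filter (fun p : α => p.1.mulVec x = p.2 ∧ p.1.mulVec y = p.2))
              = (univ.filter (fun p : α => p.1.mulVec x = p.2 ∧ p.1.mulVec (x - y) = 0)) := by
            apply Finset.filter_congr
            intro p _
            constructor
            · rintro ⟨h1, h2⟩
              exact ⟨h1, by rw [Matrix.mulVec_sub, h1, h2, sub_self]⟩
            · rintro ⟨h1, h2⟩
              rw [Matrix.mulVec_sub, sub_eq_zero] at h2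
              exact ⟨h1, h2.symm.trans h1⟩
          rw [hfe, vv_pair_count (k := k) x (fun A => A.mulVec (x - y) = 0),
            vv_mat_count hm (x - y) (sub_ne_zero.mpr (Ne.symm hy.1))]
      _ = (s - 1) * C := by
          rw [Finset.sum_const, Finset.card_erase_of_mem hx, smul_eq_mul, hs]
    have h1 : (univ.filter (fun p : α => p.1.mulVec x = p.2)).card
        ≤ (G x).card + B.card := by
      calc (univ.filter (fun p : α => p.1.mulVec x = p.2)).card
          ≤ ((univ.filter (fun p : α => p.1.mulVec x = p.2)) \ B).card + B.card :=
          Finset.card_le_card_sdiff_add_card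
      _ ≤ (G x).card + B.card := by
          exact Nat.add_le_add_right (Finset.card_le_card hsub) _
    rw [hEx] at h1
    omega
  -- total count
  have hsum2 : s * (2 ^ k * C - (s - 1) * C) ≤ ∑ x ∈ S, (G x).card := by
    have h := Finset.card_nsmul_le_sum S (fun x => (G x).card) _ hGlb
    rw [← hs, smul_eq_mul] at h
    exact h
  have hcount : Fintype.card α ≤ 8 * (univ.filter (fun a : α => a ∈ E)).card := by
    rw [hgood, Finset.card_biUnion hdisj, hNcard, hmk]
    exact le_trans (vv_arith s k C hC1 hs1 hlow hhigh) (Nat.mul_le_mul_left 8 hsum2)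
  -- transfer to ℝ≥0∞
  have hN0 : (Fintype.card α : ℝ≥0∞) ≠ 0 := by
    simp [Fintype.card_ne_zero]
  have hNtop : (Fintype.card α : ℝ≥0∞) ≠ ⊤ := ENNReal.natCast_ne_top _
  rw [show (((univ.filter (fun a : α => a ∈ E)).card : ℝ≥0∞)) * ((Fintype.card α : ℝ≥0∞))⁻¹
      = (((univ.filter (fun a : α => a ∈ E)).card : ℝ≥0∞)) / (Fintype.card α : ℝ≥0∞) from
      (div_eq_mul_inv _ _)]
  rw [ENNReal.le_div_iff_mul_le (Or.inl hN0) (Or.inl hNtop), one_div,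
    ← ENNReal.div_eq_inv_mul,
    ENNReal.div_le_iff_le_mul (Or.inl (by norm_num)) (Or.inl (by norm_num))]
  have hcount' : Fintype.card α ≤ (univ.filter (fun a : α => a ∈ E)).card * 8 := by omega
  exact_mod_cast hcount'
end

section
/- VV isolation with a random number of parity rows: there is an absolute constant c > 0 (one may take c = 1/8) such that for every m ≥ 2 and every nonempty set S ⊆ (Fin m → ZMod 2) with |S| ≤ 2^(m−2), the following holds. Choose k uniformly at random from {0, 1, …, m−1}, and independently choose A uniformly from Matrix (Fin k) (Fin m) (ZMod 2) and b uniformly from Fin k → ZMod 2. Then the probability that there is exactly one x ∈ S with A.mulVec x = b is at least c/m. -/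
open scoped ENNReal

lemma row_card {m : ℕ} (v : Fin m → ZMod 2) (hv : v ≠ 0) :
    Fintype.card {w : Fin m → ZMod 2 // dotProduct w v = 0} = 2 ^ (m - 1) := by
  classical
  obtain ⟨i, hi⟩ : ∃ i, v i ≠ 0 := by
    by_contra h; push_neg at h; exact hv (funext h)
  have hm : 1 ≤ m := i.pos
  have hvi : v i = 1 := by
    have h2 : ∀ a : ZMod 2, a ≠ 0 → a = 1 := by decide
    exact h2 _ hi
  have key : ∀ a : ZMod 2, (a = 0 ↔ ¬ (a + 1 = 0)) := by decide
  have hcard_eq : Fintype.card {w : Fin m → ZMod 2 // dotProduct w v = 0}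
      = Fintype.card {w : Fin m → ZMod 2 // ¬ dotProduct w v = 0} := by
    apply Fintype.card_congr
    refine (Equiv.addRight (Pi.single i 1)).subtypeEquiv (fun w => ?_)
    have : dotProduct (w + Pi.single i 1) v = dotProduct w v + 1 := by
      rw [add_dotProduct, single_dotProduct, hvi, one_mul]
    rw [Equiv.coe_addRight, this]
    exact key _
  have hcompl : Fintype.card {w : Fin m → ZMod 2 // ¬ dotProduct w v = 0}
      = Fintype.card (Fin m → ZMod 2)
        - Fintype.card {w : Fin m → ZMod 2 // dotProduct w v = 0} :=
    Fintype.card_subtype_compl _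
  have hle : Fintype.card {w : Fin m → ZMod 2 // dotProduct w v = 0}
      ≤ Fintype.card (Fin m → ZMod 2) := Fintype.card_subtype_le _
  have htot : Fintype.card (Fin m → ZMod 2) = 2 ^ m := by simp
  have hpow : 2 ^ m = 2 * 2 ^ (m - 1) := by
    rw [← pow_succ']
    congr 1
    omega
  omega

lemma ker_card {k m : ℕ} (v : Fin m → ZMod 2) (hv : v ≠ 0) :
    Fintype.card {A : Matrix (Fin k) (Fin m) (ZMod 2) // A.mulVec v = 0}
      = 2 ^ (k * (m - 1)) := by
  classical
  have e1 : {A : Matrix (Fin k) (Fin m) (ZMod 2) // A.mulVec v = 0}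
      ≃ {A : Fin k → Fin m → ZMod 2 // ∀ i, dotProduct (A i) v = 0} :=
    Equiv.subtypeEquivRight (fun A => by
      rw [funext_iff]
      rfl)
  have e2 : {A : Fin k → Fin m → ZMod 2 // ∀ i, dotProduct (A i) v = 0}
      ≃ (Fin k → {w : Fin m → ZMod 2 // dotProduct w v = 0}) :=
    Equiv.subtypePiEquivPi (p := fun _ w => dotProduct w v = 0)
  rw [Fintype.card_congr (e1.trans e2), Fintype.card_fun, row_card v hv,
    Fintype.card_fin, ← pow_mul, mul_comm]

lemma card_matrix' (k m : ℕ) :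
    Fintype.card (Matrix (Fin k) (Fin m) (ZMod 2)) = 2 ^ (k * m) := by
  have h : Fintype.card (Matrix (Fin k) (Fin m) (ZMod 2))
      = Fintype.card (Fin k → Fin m → ZMod 2) := Fintype.card_congr (Equiv.cast rfl)
  rw [h, Fintype.card_fun, Fintype.card_fun, Fintype.card_fin, Fintype.card_fin, ZMod.card,
    ← pow_mul, mul_comm]

lemma main_count (k m : ℕ) (hm : 1 ≤ m) (S : Finset (Fin m → ZMod 2))
    (hs : S.Nonempty) (h1 : 2 * S.card ≤ 2 ^ k) (h2 : 2 ^ k ≤ 4 * S.card) :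
    2 ^ (k * (m + 1)) ≤
      8 * Nat.card {p : Matrix (Fin k) (Fin m) (ZMod 2) × (Fin k → ZMod 2) //
        ∃! x, x ∈ S ∧ p.1.mulVec x = p.2} := by
  classical
  let C : (Fin m → ZMod 2) → Finset (Matrix (Fin k) (Fin m) (ZMod 2) × (Fin k → ZMod 2)) :=
    fun x => Finset.univ.filter (fun p => p.1.mulVec x = p.2)
  let Ex : (Fin m → ZMod 2) → Finset (Matrix (Fin k) (Fin m) (ZMod 2) × (Fin k → ZMod 2)) :=
    fun x => Finset.univ.filter
      (fun p => (p.1.mulVec x = p.2) ∧ ∀ y ∈ S, p.1.mulVec y = p.2 → y = x)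
  let E : Finset (Matrix (Fin k) (Fin m) (ZMod 2) × (Fin k → ZMod 2)) :=
    Finset.univ.filter (fun p => ∃! x, x ∈ S ∧ p.1.mulVec x = p.2)
  have memC : ∀ x p, p ∈ C x ↔ p.1.mulVec x = p.2 := by
    intro x p; simp [C]
  have memEx : ∀ x p, p ∈ Ex x ↔
      (p.1.mulVec x = p.2 ∧ ∀ y ∈ S, p.1.mulVec y = p.2 → y = x) := by
    intro x p; simp [Ex]
  have memE : ∀ p, p ∈ E ↔ (∃! x, x ∈ S ∧ p.1.mulVec x = p.2) := by
    intro p; simp [E]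
  have hNcard : Nat.card {p : Matrix (Fin k) (Fin m) (ZMod 2) × (Fin k → ZMod 2) //
      ∃! x, x ∈ S ∧ p.1.mulVec x = p.2} = E.card := by
    rw [Nat.card_eq_fintype_card, Fintype.card_subtype]
  -- card of C x
  have hC : ∀ x : Fin m → ZMod 2, (C x).card = 2 ^ (k * m) := by
    intro x
    have : (C x).card = (Finset.univ : Finset (Matrix (Fin k) (Fin m) (ZMod 2))).card := by
      refine Finset.card_nbij' (fun p => p.1) (fun A => (A, A.mulVec x)) ?_ ?_ ?_ ?_
      · intro p _; exact Finset.mem_univ _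
      · intro A _; rw [Finset.mem_coe, memC]
      · intro p hp; rw [Finset.mem_coe, memC] at hp; obtain ⟨A, b⟩ := p
        simp only at hp ⊢; rw [hp]
      · intro A _; rfl
    rw [this, Finset.card_univ, card_matrix']
  -- card of pairwise intersections
  have hCC : ∀ x y : Fin m → ZMod 2, x ≠ y →
      (C x ∩ C y).card ≤ 2 ^ (k * (m - 1)) := by
    intro x y hxy
    have hv : x - y ≠ 0 := sub_ne_zero_of_ne hxy
    have heq : (C x ∩ C y).card
        = (Finset.univ.filter
            (fun A : Matrix (Fin k) (Fin m) (ZMod 2) => A.mulVec (x - y) = 0)).card := by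
      refine Finset.card_nbij' (fun p => p.1) (fun A => (A, A.mulVec x)) ?_ ?_ ?_ ?_
      · intro p hp
        rw [Finset.mem_coe, Finset.mem_inter, memC, memC] at hp
        simp only [Finset.mem_coe, Finset.mem_filter, Finset.mem_univ, true_and]
        rw [Matrix.mulVec_sub, hp.1, hp.2, sub_self]
      · intro A hA
        simp only [Finset.mem_coe, Finset.mem_filter, Finset.mem_univ, true_and] at hA
        rw [Matrix.mulVec_sub, sub_eq_zero] at hA
        rw [Finset.mem_coe, Finset.mem_inter, memC, memC]
        exact ⟨rfl, hA.symm⟩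
      · intro p hp
        rw [Finset.mem_coe, Finset.mem_inter, memC, memC] at hp
        obtain ⟨A, b⟩ := p
        simp only at hp ⊢; rw [hp.1]
      · intro A _; rfl
    rw [heq, ← Fintype.card_subtype, ker_card (x - y) hv]
  -- E contains the disjoint union of the Ex over S
  have hdisj : ∀ x ∈ S, ∀ y ∈ S, x ≠ y → Disjoint (Ex x) (Ex y) := by
    intro x hx y hy hxy
    rw [Finset.disjoint_left]
    intro p hpx hpy
    rw [memEx] at hpx hpy
    exact hxy (hpy.2 x hx hpx.1)
  have hsub : S.biUnion Ex ⊆ E := by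
    intro p hp
    rw [Finset.mem_biUnion] at hp
    obtain ⟨x, hx, hpx⟩ := hp
    rw [memEx] at hpx
    rw [memE]
    exact ⟨x, ⟨hx, hpx.1⟩, fun y hy => hpx.2 y hy.1 hy.2⟩
  have hEsum : ∑ x ∈ S, (Ex x).card ≤ E.card := by
    rw [← Finset.card_biUnion hdisj]
    exact Finset.card_le_card hsub
  -- union bound
  have hUB : ∀ x ∈ S, (C x).card ≤ (Ex x).card + (S.card - 1) * 2 ^ (k * (m - 1)) := by
    intro x hx
    have hsub2 : C x ⊆ Ex x ∪ (S.erase x).biUnion (fun y => C x ∩ C y) := by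
      intro p hp
      rw [memC] at hp
      by_cases h : ∀ y ∈ S, p.1.mulVec y = p.2 → y = x
      · exact Finset.mem_union_left _ ((memEx x p).mpr ⟨hp, h⟩)
      · push_neg at h
        obtain ⟨y, hyS, hyp, hyx⟩ := h
        refine Finset.mem_union_right _
          (Finset.mem_biUnion.mpr ⟨y, Finset.mem_erase.mpr ⟨hyx, hyS⟩, ?_⟩)
        rw [Finset.mem_inter, memC, memC]
        exact ⟨hp, hyp⟩
    calc (C x).card ≤ (Ex x ∪ (S.erase x).biUnion (fun y => C x ∩ C y)).card :=
          Finset.card_le_card hsub2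
      _ ≤ (Ex x).card + ((S.erase x).biUnion (fun y => C x ∩ C y)).card :=
          Finset.card_union_le _ _
      _ ≤ (Ex x).card + ∑ y ∈ S.erase x, (C x ∩ C y).card := by
          gcongr
          exact Finset.card_biUnion_le
      _ ≤ (Ex x).card + ∑ y ∈ S.erase x, 2 ^ (k * (m - 1)) := by
          gcongr with y hy
          exact hCC x y (Ne.symm (Finset.mem_erase.mp hy).1)
      _ = (Ex x).card + (S.card - 1) * 2 ^ (k * (m - 1)) := by
          rw [Finset.sum_const, smul_eq_mul, Finset.card_erase_of_mem hx]
  -- combine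
  have hmain : S.card * 2 ^ (k * m) ≤ E.card + S.card * ((S.card - 1) * 2 ^ (k * (m - 1))) := by
    calc S.card * 2 ^ (k * m) = ∑ x ∈ S, (C x).card := by
          rw [Finset.sum_congr rfl (fun x _ => hC x), Finset.sum_const, smul_eq_mul]
      _ ≤ ∑ x ∈ S, ((Ex x).card + (S.card - 1) * 2 ^ (k * (m - 1))) :=
          Finset.sum_le_sum hUB
      _ = (∑ x ∈ S, (Ex x).card) + S.card * ((S.card - 1) * 2 ^ (k * (m - 1))) := by
          rw [Finset.sum_add_distrib, Finset.sum_const, smul_eq_mul]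
      _ ≤ E.card + S.card * ((S.card - 1) * 2 ^ (k * (m - 1))) :=
          Nat.add_le_add_right hEsum _
  -- arithmetic
  rw [hNcard]
  obtain ⟨n, rfl⟩ : ∃ n, m = n + 1 := ⟨m - 1, by omega⟩
  set s := S.card with hsdef
  have hs1 : 1 ≤ s := Finset.card_pos.mpr hs
  set P := 2 ^ (k * n) with hPdef
  have hkm : 2 ^ (k * (n + 1)) = P * 2 ^ k := by
    rw [hPdef, ← pow_add]; ring_nf
  have hkm1 : 2 ^ (k * (n + 1 + 1)) = P * 2 ^ k * 2 ^ k := by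
    rw [hPdef, ← pow_add, ← pow_add]; ring_nf
  simp only [Nat.add_sub_cancel] at hmain hUB hCC ⊢
  rw [hkm] at hmain
  rw [hkm1]
  set t := 2 ^ k with htdef
  -- now: hmain : s * (P * t) ≤ E.card + s * ((s-1) * P), goal : P * t * t ≤ 8 * E.card
  have e1 : P * t * t ≤ 4 * s * (P * t) := by
    calc P * t * t = (P * t) * t := rfl
      _ ≤ (P * t) * (4 * s) := Nat.mul_le_mul_left _ h2
      _ = 4 * s * (P * t) := by ring
  have e2 : 8 * (s * ((s - 1) * P)) ≤ 4 * s * (P * t) := by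
    calc 8 * (s * ((s - 1) * P)) = (4 * s) * ((2 * (s - 1)) * P) := by ring
      _ ≤ (4 * s) * (t * P) := by
          apply Nat.mul_le_mul_left
          apply Nat.mul_le_mul_right
          omega
      _ = 4 * s * (P * t) := by ring
  have e3 : 8 * (s * (P * t)) ≤ 8 * E.card + 8 * (s * ((s - 1) * P)) := by
    calc 8 * (s * (P * t)) ≤ 8 * (E.card + s * ((s - 1) * P)) := Nat.mul_le_mul_left _ hmain
      _ = 8 * E.card + 8 * (s * ((s - 1) * P)) := by ring
  have e4 : 8 * (s * (P * t)) = 4 * s * (P * t) + 4 * s * (P * t) := by ring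
  omega

/-- VV isolation with a random number of parity rows: there is an absolute constant `c > 0`
such that for all `m ≥ 2` and every nonempty `S ⊆ (Fin m → ZMod 2)` with `|S| ≤ 2^(m-2)`,
choosing `k` uniformly from `{0, …, m-1}` and then `(A, b)` uniformly, the probability
that exactly one `x ∈ S` satisfies `A x = b` is at least `c/m`.  Here the probability over
the two-stage experiment is written as the average over `k ∈ range m` of the inner
probabilities. -/
theorem vv_isolation_random_k :
    ∃ c : ℝ, 0 < c ∧
      ∀ m : ℕ, 2 ≤ m → ∀ S : Finset (Fin m → ZMod 2), S.Nonempty →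
        S.card ≤ 2 ^ (m - 2) →
        ENNReal.ofReal (c / m) ≤
          (m : ℝ≥0∞)⁻¹ *
            ∑ k ∈ Finset.range m,
              (PMF.uniformOfFintype
                  (Matrix (Fin k) (Fin m) (ZMod 2) × (Fin k → ZMod 2))).toMeasure
                {p | ∃! x, x ∈ S ∧ p.1.mulVec x = p.2} := by
  classical
  refine ⟨1/8, by norm_num, ?_⟩
  intro m hm S hS hcard
  set s := S.card with hsdef
  have hs1 : 1 ≤ s := Finset.card_pos.mpr hS
  set k₀ := Nat.clog 2 (2 * s) with hk₀
  have hk1 : 2 * s ≤ 2 ^ k₀ := Nat.le_pow_clog one_lt_two _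
  have hk₀pos : 1 ≤ k₀ := Nat.clog_pos one_lt_two (by omega)
  have hk2 : 2 ^ k₀ ≤ 4 * s := by
    have hlt : 2 ^ (k₀ - 1) < 2 * s := Nat.pow_pred_clog_lt_self one_lt_two (by omega)
    have : 2 ^ k₀ = 2 * 2 ^ (k₀ - 1) := by
      rw [← pow_succ']; congr 1; omega
    omega
  have hk₀lt : k₀ < m := by
    have h2s : 2 * s ≤ 2 ^ (m - 1) := by
      have : 2 * s ≤ 2 * 2 ^ (m - 2) := by omega
      have hpow : 2 * 2 ^ (m - 2) = 2 ^ (m - 1) := by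
        rw [← pow_succ']; congr 1; omega
      omega
    have := (Nat.clog_le_iff_le_pow one_lt_two).mpr h2s
    omega
  -- measurability and singleton class instances
  have measE : ∀ k : ℕ, MeasurableSet
      {p : Matrix (Fin k) (Fin m) (ZMod 2) × (Fin k → ZMod 2) |
        ∃! x, x ∈ S ∧ p.1.mulVec x = p.2} := by
    intro k
    haveI : MeasurableSingletonClass (Matrix (Fin k) (Fin m) (ZMod 2)) := ⟨fun _ => trivial⟩
    haveI : MeasurableSingletonClass (ZMod 2) := ⟨fun _ => trivial⟩
    exact (Set.toFinite _).measurableSet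
  -- the term at k₀ is at least 8⁻¹
  have hterm : (8 : ℝ≥0∞)⁻¹ ≤
      (PMF.uniformOfFintype
          (Matrix (Fin k₀) (Fin m) (ZMod 2) × (Fin k₀ → ZMod 2))).toMeasure
        {p | ∃! x, x ∈ S ∧ p.1.mulVec x = p.2} := by
    rw [PMF.toMeasure_uniformOfFintype_apply _ (measE k₀)]
    have hcards : Fintype.card
        (Matrix (Fin k₀) (Fin m) (ZMod 2) × (Fin k₀ → ZMod 2)) = 2 ^ (k₀ * (m + 1)) := by
      rw [Fintype.card_prod, card_matrix', Fintype.card_fun, Fintype.card_fin, ZMod.card,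
        ← pow_add]
      ring_nf
    have hN : Fintype.card
        ({p : Matrix (Fin k₀) (Fin m) (ZMod 2) × (Fin k₀ → ZMod 2) |
          ∃! x, x ∈ S ∧ p.1.mulVec x = p.2} : Set _)
        = Nat.card {p : Matrix (Fin k₀) (Fin m) (ZMod 2) × (Fin k₀ → ZMod 2) //
          ∃! x, x ∈ S ∧ p.1.mulVec x = p.2} := by
      rw [Nat.card_eq_fintype_card]
      rfl
    rw [hcards, hN]
    have hle := main_count k₀ m (by omega) S hS hk1 hk2
    rw [ENNReal.le_div_iff_mul_le
      (Or.inl (by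
        simp only [ne_eq, Nat.cast_eq_zero]
        positivity))
      (Or.inl (ENNReal.natCast_ne_top _))]
    calc (8 : ℝ≥0∞)⁻¹ * (2 ^ (k₀ * (m + 1)) : ℕ)
        ≤ (8 : ℝ≥0∞)⁻¹ * ((8 : ℕ) * (Nat.card {p : Matrix (Fin k₀) (Fin m) (ZMod 2) × (Fin k₀ → ZMod 2) //
          ∃! x, x ∈ S ∧ p.1.mulVec x = p.2} : ℕ)) := by
          gcongr
          exact_mod_cast hle
      _ = (Nat.card {p : Matrix (Fin k₀) (Fin m) (ZMod 2) × (Fin k₀ → ZMod 2) //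
          ∃! x, x ∈ S ∧ p.1.mulVec x = p.2} : ℝ≥0∞) := by
          push_cast
          rw [← mul_assoc, ENNReal.inv_mul_cancel (by norm_num) (by norm_num), one_mul]
  -- sum over k is at least the k₀ term
  have hsum : (8 : ℝ≥0∞)⁻¹ ≤
      ∑ k ∈ Finset.range m,
        (PMF.uniformOfFintype
            (Matrix (Fin k) (Fin m) (ZMod 2) × (Fin k → ZMod 2))).toMeasure
          {p | ∃! x, x ∈ S ∧ p.1.mulVec x = p.2} :=
    hterm.trans (Finset.single_le_sum (f := fun k =>
      (PMF.uniformOfFintype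
          (Matrix (Fin k) (Fin m) (ZMod 2) × (Fin k → ZMod 2))).toMeasure
        {p | ∃! x, x ∈ S ∧ p.1.mulVec x = p.2})
      (fun _ _ => zero_le) (Finset.mem_range.mpr hk₀lt))
  have hmne : (m : ℝ≥0∞) ≠ 0 := Nat.cast_ne_zero.mpr (by omega)
  calc ENNReal.ofReal ((1/8) / m) = (m : ℝ≥0∞)⁻¹ * 8⁻¹ := by
        have hm0 : (0:ℝ) < m := by exact_mod_cast Nat.pos_of_ne_zero (by omega)
        rw [show (1:ℝ)/8/(m:ℝ) = ((8:ℝ)*m)⁻¹ by field_simp]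
        rw [ENNReal.ofReal_inv_of_pos (by positivity), ENNReal.ofReal_mul (by norm_num)]
        rw [ENNReal.mul_inv (Or.inr (ENNReal.ofReal_ne_top)) (Or.inl (by norm_num))]
        rw [ENNReal.ofReal_natCast, mul_comm]
        norm_num
    _ ≤ (m : ℝ≥0∞)⁻¹ *
          ∑ k ∈ Finset.range m,
            (PMF.uniformOfFintype
                (Matrix (Fin k) (Fin m) (ZMod 2) × (Fin k → ZMod 2))).toMeasure
              {p | ∃! x, x ∈ S ∧ p.1.mulVec x = p.2} := by
        gcongr
end

section
/- Symmetrization preserves success exactly (counting form): fix m, k, σ : Fin m → ZMod 2, and let G_σ denote the map on instances (F, A, b) ↦ (flip_σ F, A, b + A.mulVec σ). Let I be a finite set of instances, each having exactly one solution, denoted w(Φ), and suppose I is closed under G_σ (note G_σ is an involution on instances). Then for every function P from instances to assignments (Fin m → ZMod 2), the number of Φ ∈ I with P(Φ) = w(Φ) equals the number of Φ ∈ I with P(G_σ Φ) + σ = w(Φ). In particular, under the uniform distribution on I, the success probability of P equals that of the back-mapped symmetrized predictor Φ ↦ P(G_σ Φ) + σ. -/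
/-- An assignment to `m` Boolean variables, valued in `ZMod 2`. -/
abbrev Assignment (m : ℕ) := Fin m → ZMod 2

/-- A literal is a pair `(i, ε)`: variable index and required value. -/
abbrev Literal (m : ℕ) := Fin m × ZMod 2

/-- A clause is a list of literals. -/
abbrev Clause (m : ℕ) := List (Literal m)

/-- A CNF is a list of clauses. -/
abbrev CNF (m : ℕ) := List (Clause m)

/-- `x` satisfies the literal `(i, ε)` iff `x i = ε`. -/
def satLit {m : ℕ} (x : Assignment m) (l : Literal m) : Prop := x l.1 = l.2

/-- `x` satisfies a clause iff it satisfies some literal of the clause. -/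
def satClause {m : ℕ} (x : Assignment m) (c : Clause m) : Prop := ∃ l ∈ c, satLit x l

/-- `x` satisfies a CNF iff it satisfies every clause. -/
def satCNF {m : ℕ} (x : Assignment m) (F : CNF m) : Prop := ∀ c ∈ F, satClause x c

/-- The sign flip `flip_σ F`: replace every literal `(i, ε)` with `(i, ε + σ i)`. -/
def flipCNF {m : ℕ} (σ : Assignment m) (F : CNF m) : CNF m :=
  F.map (fun c => c.map (fun l => (l.1, l.2 + σ l.1)))

/-- An instance `(F, A, b)`: a CNF together with an XOR (isolation) layer. -/
abbrev Inst (m k : ℕ) := CNF m × Matrix (Fin k) (Fin m) (ZMod 2) × (Fin k → ZMod 2)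

/-- `x` is a solution of the instance `(F, A, b)`: it satisfies `F` and `A x = b`. -/
def IsSolutionInst {m k : ℕ} (Φ : Inst m k) (x : Assignment m) : Prop :=
  satCNF x Φ.1 ∧ Φ.2.1.mulVec x = Φ.2.2

/-- The symmetrization map `G_σ : (F, A, b) ↦ (flip_σ F, A, b + A σ)`. -/
def Gmap {m k : ℕ} (σ : Assignment m) (Φ : Inst m k) : Inst m k :=
  (flipCNF σ Φ.1, Φ.2.1, Φ.2.2 + Φ.2.1.mulVec σ)

lemma add_add_self {m : ℕ} (x σ : Assignment m) : x + σ + σ = x := by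
  funext i
  simp [Pi.add_apply, add_assoc, CharTwo.add_self_eq_zero]

lemma Gmap_invol {m k : ℕ} (σ : Assignment m) (Φ : Inst m k) :
    Gmap σ (Gmap σ Φ) = Φ := by
  obtain ⟨F, A, b⟩ := Φ
  have hb : b + A.mulVec σ + A.mulVec σ = b := by
    funext i
    simp [Pi.add_apply, add_assoc, CharTwo.add_self_eq_zero]
  have hF : flipCNF σ (flipCNF σ F) = F := by
    simp only [flipCNF, List.map_map]
    induction F with
    | nil => rfl
    | cons c t ih =>
      simp only [List.map_cons, List.cons.injEq]
      refine ⟨?_, ih⟩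
      simp only [Function.comp, List.map_map]
      induction c with
      | nil => rfl
      | cons l t' ih' =>
        simp only [List.map_cons, List.cons.injEq] at ih' ⊢
        exact ⟨by simp [add_assoc, CharTwo.add_self_eq_zero], ih'⟩
  show (flipCNF σ (flipCNF σ F), A, b + A.mulVec σ + A.mulVec σ) = (F, A, b)
  rw [hF, hb]

lemma sol_Gmap {m k : ℕ} (σ : Assignment m) (Φ : Inst m k) (x : Assignment m)
    (h : IsSolutionInst Φ x) : IsSolutionInst (Gmap σ Φ) (x + σ) := by
  obtain ⟨hF, hA⟩ := h
  constructor
  · intro c hc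
    simp only [Gmap, flipCNF, List.mem_map] at hc
    obtain ⟨c', hc', rfl⟩ := hc
    obtain ⟨l, hl, hsl⟩ := hF c' hc'
    exact ⟨(l.1, l.2 + σ l.1), List.mem_map_of_mem hl, by
      simp [satLit] at hsl ⊢; rw [hsl]⟩
  · show Φ.2.1.mulVec (x + σ) = Φ.2.2 + Φ.2.1.mulVec σ
    rw [Matrix.mulVec_add, hA]

/-- Symmetrization preserves success exactly (counting form): if `I` is a finite set of
unique-witness instances closed under `G_σ`, with witness function `w`, then for every
predictor `P` the number of instances on which `P` is correct equals the number of
instances on which the back-mapped symmetrized predictor `Φ ↦ P (G_σ Φ) + σ` is correct;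
in particular the two predictors have the same success probability under the uniform
distribution on `I`. -/
theorem symmetrization_preserves_success {m k : ℕ} (σ : Assignment m)
    (I : Finset (Inst m k)) (w : Inst m k → Assignment m)
    (hw : ∀ Φ ∈ I, IsSolutionInst Φ (w Φ) ∧ ∀ y, IsSolutionInst Φ y → y = w Φ)
    (hclosed : ∀ Φ ∈ I, Gmap σ Φ ∈ I)
    (P : Inst m k → Assignment m) :
    (I.filter (fun Φ => P Φ = w Φ)).card
      = (I.filter (fun Φ => P (Gmap σ Φ) + σ = w Φ)).card ∧
    ((I.filter (fun Φ => P Φ = w Φ)).card : ℝ) / I.card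
      = ((I.filter (fun Φ => P (Gmap σ Φ) + σ = w Φ)).card : ℝ) / I.card := by
  have hwG : ∀ Φ ∈ I, w (Gmap σ Φ) = w Φ + σ := by
    intro Φ hΦ
    exact ((hw _ (hclosed Φ hΦ)).2 _ (sol_Gmap σ Φ (w Φ) (hw Φ hΦ).1)).symm
  have key : (I.filter (fun Φ => P Φ = w Φ)).card
      = (I.filter (fun Φ => P (Gmap σ Φ) + σ = w Φ)).card := by
    apply Finset.card_bij' (fun Φ _ => Gmap σ Φ) (fun Φ _ => Gmap σ Φ)
    · intro Φ hΦ
      simp only [Finset.mem_filter] at hΦ ⊢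
      refine ⟨hclosed Φ hΦ.1, ?_⟩
      rw [Gmap_invol, hΦ.2, hwG Φ hΦ.1]
    · intro Φ hΦ
      simp only [Finset.mem_filter] at hΦ ⊢
      refine ⟨hclosed Φ hΦ.1, ?_⟩
      rw [hwG Φ hΦ.1, ← hΦ.2, add_add_self]
    · intro Φ _; exact Gmap_invol σ Φ
    · intro Φ _; exact Gmap_invol σ Φ
  exact ⟨key, by rw [key]⟩
end
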